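/- Let Ā ∈ ℝ^{n×n} and μ > 0, K₁ > 0 satisfy ‖e^{Āᵀ t}‖ ≤ K₁ e^{−μ t} for all t ≥ 0. Let T > 0, λ > μ, K₂ > 0, and let ĥ : [0,T] → ℝⁿ be continuous with |ĥ(t)| ≤ K₂ e^{−λ(T−t)} for all t ∈ [0,T]. Let p̂ : [0,T] → ℝⁿ be differentiable with ṗ̂(t) + Āᵀ p̂(t) + ĥ(t) = 0 on [0,T] and |p̂(T)| ≤ K₂. Then there exists K > 0, depending only on K₁, K₂, μ, λ (not on T), such that |p̂(t)| ≤ K e^{−μ(T−t)} for all t ∈ [0,T]. -/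

import Mathlib

open Matrix Set
open scoped Matrix.Norms.L2Operator

/-- The Euclidean norm on `ℝᵏ`. -/
noncomputable def eucNorm {k : ℕ} (v : Fin k → ℝ) : ℝ := Real.sqrt (v ⬝ᵥ v)

/-- `Matrix.toEuclideanCLM` as a continuous linear map. -/
noncomputable def PhiCLM {n : ℕ} : Matrix (Fin n) (Fin n) ℝ →L[ℝ]
    (EuclideanSpace ℝ (Fin n) →L[ℝ] EuclideanSpace ℝ (Fin n)) :=
  LinearMap.mkContinuous
    { toFun := fun A => Matrix.toEuclideanCLM (𝕜 := ℝ) A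
      map_add' := fun A B => map_add _ A B
      map_smul' := fun c A => map_smul _ c A } 1
    (fun A => by rw [one_mul]; exact le_of_eq (Matrix.cstar_norm_def A).symm)

lemma PhiCLM_norm {n : ℕ} (A : Matrix (Fin n) (Fin n) ℝ) : ‖PhiCLM A‖ = ‖A‖ := rfl

lemma PhiCLM_one_apply {n : ℕ} (v : EuclideanSpace ℝ (Fin n)) : PhiCLM 1 v = v := by
  show Matrix.toEuclideanCLM (𝕜 := ℝ) 1 v = v
  rw [_root_.map_one]; rfl

lemma PhiCLM_mul_apply {n : ℕ} (A B : Matrix (Fin n) (Fin n) ℝ)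
    (v : EuclideanSpace ℝ (Fin n)) : PhiCLM (A * B) v = PhiCLM A (PhiCLM B v) := by
  show Matrix.toEuclideanCLM (𝕜 := ℝ) (A * B) v = _
  rw [_root_.map_mul]; rfl

lemma PhiCLM_mulVec {n : ℕ} (A : Matrix (Fin n) (Fin n) ℝ) (v : Fin n → ℝ) :
    PhiCLM A ((EuclideanSpace.equiv (Fin n) ℝ).symm v)
      = (EuclideanSpace.equiv (Fin n) ℝ).symm (A *ᵥ v) := by
  show Matrix.toEuclideanCLM (𝕜 := ℝ) A _ = _
  simp

lemma enorm_eq {n : ℕ} (v : Fin n → ℝ) :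
    eucNorm v = ‖(EuclideanSpace.equiv (Fin n) ℝ).symm v‖ := by
  simp [eucNorm, EuclideanSpace.norm_eq, dotProduct, Real.norm_eq_abs, sq_abs, sq]

lemma enorm_nonneg' {n : ℕ} (v : Fin n → ℝ) : 0 ≤ eucNorm v := Real.sqrt_nonneg _

/-- if `‖e^{Āᵀt}‖ ≤ K₁e^{−μt}` for `t ≥ 0` and `λ > μ`, then any solution of
the backward ODE `ṗ̂ + Āᵀp̂ + ĥ = 0` on `[0,T]` with `|ĥ(t)| ≤ K₂e^{−λ(T−t)}` and
`|p̂(T)| ≤ K₂` satisfies `|p̂(t)| ≤ Ke^{−μ(T−t)}` with `K` independent of `T`. -/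
theorem stmt13 {n : ℕ} (Abar : Matrix (Fin n) (Fin n) ℝ)
    (μ K₁ lam K₂ : ℝ) (hμ : 0 < μ) (hK₁ : 0 < K₁) (hlam : μ < lam) (hK₂ : 0 < K₂)
    (hexp : ∀ t : ℝ, 0 ≤ t →
      ‖NormedSpace.exp (t • Abarᵀ)‖ ≤ K₁ * Real.exp (-μ * t)) :
    ∃ K > (0 : ℝ), ∀ T > (0 : ℝ), ∀ hhat : ℝ → Fin n → ℝ,
      ContinuousOn hhat (Icc 0 T) →
      (∀ t ∈ Icc (0 : ℝ) T, eucNorm (hhat t) ≤ K₂ * Real.exp (-lam * (T - t))) →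
      ∀ phat phat' : ℝ → Fin n → ℝ,
        (∀ t ∈ Icc (0 : ℝ) T, HasDerivWithinAt phat (phat' t) (Icc (0 : ℝ) T) t) →
        (∀ t ∈ Icc (0 : ℝ) T, phat' t + Abarᵀ *ᵥ phat t + hhat t = 0) →
        eucNorm (phat T) ≤ K₂ →
        ∀ t ∈ Icc (0 : ℝ) T, eucNorm (phat t) ≤ K * Real.exp (-μ * (T - t)) := by
  have hlm : (0 : ℝ) < lam - μ := sub_pos.mpr hlam
  refine ⟨K₁ * K₂ * (1 + 1 / (lam - μ)), by positivity, ?_⟩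
  intro T hT hhat hhcont hhbd phat phat' hderiv hode hpT t ht
  set M : Matrix (Fin n) (Fin n) ℝ := Abarᵀ with hMdef
  set ι : (Fin n → ℝ) ≃L[ℝ] EuclideanSpace ℝ (Fin n) :=
    (EuclideanSpace.equiv (Fin n) ℝ).symm with hιdef
  set q : ℝ → EuclideanSpace ℝ (Fin n) :=
    fun s => PhiCLM (NormedSpace.exp ((s - t) • M)) (ι (phat s)) with hqdef
  set D : ℝ → EuclideanSpace ℝ (Fin n) :=
    fun s => PhiCLM (NormedSpace.exp ((s - t) • M)) (ι (-(hhat s))) with hDdef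
  have hsub : Icc t T ⊆ Icc (0 : ℝ) T := Icc_subset_Icc ht.1 le_rfl
  have hιe : ∀ v : Fin n → ℝ, ‖ι v‖ = eucNorm v := fun v => (enorm_eq v).symm
  -- derivative of q
  have hq : ∀ s ∈ Icc t T, HasDerivWithinAt q (D s) (Icc t T) s := by
    intro s hs
    have hs0 : s ∈ Icc (0 : ℝ) T := hsub hs
    have hP : HasDerivWithinAt (fun u => ι (phat u)) (ι (phat' s)) (Icc t T) s := by
      have := (ι.toContinuousLinearMap.hasFDerivAt.comp_hasDerivWithinAt s
        ((hderiv s hs0).mono hsub))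
      exact this
    have hC : HasDerivAt (fun u : ℝ => PhiCLM (NormedSpace.exp ((u - t) • M)))
        (PhiCLM (NormedSpace.exp ((s - t) • M) * M)) s := by
      have h1 : HasDerivAt (fun u : ℝ => NormedSpace.exp ((u - t) • M))
          (NormedSpace.exp ((s - t) • M) * M) s := by
        have := (hasDerivAt_exp_smul_const M (s - t)).scomp s ((hasDerivAt_id s).sub_const t)
        rw [one_smul] at this
        exact this
      exact PhiCLM.hasFDerivAt.comp_hasDerivAt s h1
    have hcomb := hC.hasDerivWithinAt.clm_apply hP
    have hsum : M *ᵥ phat s + phat' s = -(hhat s) := by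
      have h := hode s hs0
      have h2 : (M *ᵥ phat s + phat' s) + hhat s = 0 := by
        rw [add_comm (M *ᵥ phat s)]; exact h
      exact eq_neg_of_add_eq_zero_left h2
    have heq : PhiCLM (NormedSpace.exp ((s - t) • M) * M) (ι (phat s))
        + PhiCLM (NormedSpace.exp ((s - t) • M)) (ι (phat' s)) = D s := by
      have hmv : PhiCLM M (ι (phat s)) = ι (M *ᵥ phat s) := PhiCLM_mulVec M (phat s)
      have hinner : PhiCLM M (ι (phat s)) + ι (phat' s) = ι (-(hhat s)) := by
        rw [hmv, ← ι.map_add, hsum]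
      rw [PhiCLM_mul_apply, ← (PhiCLM (NormedSpace.exp ((s - t) • M))).map_add, hinner]
    rw [← heq]
    exact hcomb
  have hqcont : ContinuousOn q (Icc t T) := fun s hs => (hq s hs).continuousWithinAt
  -- the bound function
  set c : ℝ := K₁ * K₂ * Real.exp (-μ * (T - t)) with hcdef
  have hc : 0 < c := by positivity
  set B : ℝ → ℝ := fun s => c / (lam - μ) *
    (Real.exp (-(lam - μ) * (T - s)) - Real.exp (-(lam - μ) * (T - t))) with hBdef
  set B' : ℝ → ℝ := fun s => c * Real.exp (-(lam - μ) * (T - s)) with hB'def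
  have hB : ∀ x : ℝ, HasDerivAt B (B' x) x := by
    intro x
    have h1 : HasDerivAt (fun s : ℝ => -(lam - μ) * (T - s)) (lam - μ) x := by
      have := ((hasDerivAt_id x).const_sub T).const_mul (-(lam - μ))
      simpa using this
    have h2 := (Real.hasDerivAt_exp (-(lam - μ) * (T - x))).comp x h1
    have h3 := (h2.sub_const (Real.exp (-(lam - μ) * (T - t)))).const_mul (c / (lam - μ))
    refine h3.congr_deriv ?_
    rw [mul_comm (Real.exp _) (lam - μ), ← mul_assoc, div_mul_cancel₀ c hlm.ne']
  -- bound on the derivative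
  have hbound : ∀ x ∈ Ico t T, ‖D x‖ ≤ B' x := by
    intro x hx
    have hx0 : x ∈ Icc (0 : ℝ) T := hsub ⟨hx.1, hx.2.le⟩
    have h2 : ‖ι (-(hhat x))‖ = eucNorm (hhat x) := by
      rw [ι.map_neg, norm_neg, hιe]
    have h1 : ‖D x‖ ≤ ‖NormedSpace.exp ((x - t) • M)‖ * eucNorm (hhat x) := by
      calc ‖D x‖ ≤ ‖PhiCLM (NormedSpace.exp ((x - t) • M))‖ * ‖ι (-(hhat x))‖ :=
            (PhiCLM (NormedSpace.exp ((x - t) • M))).le_opNorm _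
        _ = _ := by rw [PhiCLM_norm, h2]
    have h3 : ‖D x‖ ≤ (K₁ * Real.exp (-μ * (x - t))) * (K₂ * Real.exp (-lam * (T - x))) := by
      refine h1.trans (mul_le_mul (hexp (x - t) (sub_nonneg.mpr hx.1)) (hhbd x hx0)
        (enorm_nonneg' _) (by positivity))
    refine h3.trans (le_of_eq ?_)
    rw [hB'def, hcdef]
    have hee : -μ * (x - t) + -lam * (T - x) = -μ * (T - t) + -(lam - μ) * (T - x) := by ring
    calc K₁ * Real.exp (-μ * (x - t)) * (K₂ * Real.exp (-lam * (T - x)))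
        = K₁ * K₂ * Real.exp (-μ * (x - t) + -lam * (T - x)) := by
          rw [Real.exp_add]; ring
      _ = K₁ * K₂ * Real.exp (-μ * (T - t) + -(lam - μ) * (T - x)) := by rw [hee]
      _ = K₁ * K₂ * Real.exp (-μ * (T - t)) * Real.exp (-(lam - μ) * (T - x)) := by
          rw [Real.exp_add]; ring
  -- mean value estimate
  have hf' : ∀ x ∈ Ico t T, HasDerivWithinAt (fun s => q s - q t) (D x) (Ici x) x := by
    intro x hx
    exact ((hq x ⟨hx.1, hx.2.le⟩).sub_const (q t)).mono_of_mem_nhdsWithin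
      (Icc_mem_nhdsGE_of_mem hx)
  have ha : ‖q t - q t‖ ≤ B t := by simp [hBdef]
  have hBT := image_norm_le_of_norm_deriv_right_le_deriv_boundary
    (hqcont.sub continuousOn_const) hf' ha hB hbound (right_mem_Icc.mpr ht.2)
  -- hBT : ‖q T - q t‖ ≤ B T
  have hBT' : B T ≤ c / (lam - μ) := by
    rw [hBdef]
    simp only [sub_self, mul_zero, Real.exp_zero]
    nlinarith [Real.exp_pos (-(lam - μ) * (T - t)),
      mul_nonneg (div_nonneg hc.le hlm.le) (Real.exp_pos (-(lam - μ) * (T - t))).le]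
  have hqt : q t = ι (phat t) := by
    rw [hqdef]
    simp only [sub_self, zero_smul, NormedSpace.exp_zero, PhiCLM_one_apply]
  have hqTn : ‖q T‖ ≤ K₁ * Real.exp (-μ * (T - t)) * K₂ := by
    calc ‖q T‖ ≤ ‖PhiCLM (NormedSpace.exp ((T - t) • M))‖ * ‖ι (phat T)‖ :=
          (PhiCLM (NormedSpace.exp ((T - t) • M))).le_opNorm _
      _ = ‖NormedSpace.exp ((T - t) • M)‖ * eucNorm (phat T) := by rw [PhiCLM_norm, hιe]
      _ ≤ (K₁ * Real.exp (-μ * (T - t))) * K₂ :=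
          mul_le_mul (hexp (T - t) (sub_nonneg.mpr ht.2)) hpT (enorm_nonneg' _) (by positivity)
  calc eucNorm (phat t) = ‖ι (phat t)‖ := (hιe _).symm
    _ = ‖q t‖ := by rw [hqt]
    _ = ‖q T - (q T - q t)‖ := by rw [sub_sub_cancel]
    _ ≤ ‖q T‖ + ‖q T - q t‖ := norm_sub_le _ _
    _ ≤ K₁ * Real.exp (-μ * (T - t)) * K₂ + c / (lam - μ) :=
        add_le_add hqTn (hBT.trans hBT')
    _ = K₁ * K₂ * (1 + 1 / (lam - μ)) * Real.exp (-μ * (T - t)) := by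
        rw [hcdef]; field_simp
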